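/- arXiv:2008.12777 — 7 statements merged into one kernel-verified Lean document; each statement's English description precedes it below -/
import Mathlib

section
/- For all real numbers ℓ₁, ℓ₂, ℓ₃, setting Gᵢ = exp(ℓᵢ/2) + exp(−ℓᵢ/2) for i = 1,2,3, one has G₁G₂G₃ + G₁² + G₂² + G₃² − 4 = (exp(−(ℓ₁+ℓ₂+ℓ₃)/2) + 1)·(exp((ℓ₁+ℓ₂−ℓ₃)/2) + 1)·(exp((ℓ₁+ℓ₃−ℓ₂)/2) + 1)·(exp((ℓ₂+ℓ₃−ℓ₁)/2) + 1). -/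
/-- Identity (TTTT): for `Gᵢ = 2 cosh(ℓᵢ/2)`,
`G₁G₂G₃ + G₁² + G₂² + G₃² − 4` factors into four factors of the form `exp(·) + 1`. -/
theorem geodesic_function_factorization (l₁ l₂ l₃ : ℝ)
    (G₁ G₂ G₃ : ℝ)
    (hG₁ : G₁ = Real.exp (l₁ / 2) + Real.exp (-l₁ / 2))
    (hG₂ : G₂ = Real.exp (l₂ / 2) + Real.exp (-l₂ / 2))
    (hG₃ : G₃ = Real.exp (l₃ / 2) + Real.exp (-l₃ / 2)) :
    G₁ * G₂ * G₃ + G₁ ^ 2 + G₂ ^ 2 + G₃ ^ 2 - 4 =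
      (Real.exp (-(l₁ + l₂ + l₃) / 2) + 1) * (Real.exp ((l₁ + l₂ - l₃) / 2) + 1) *
        (Real.exp ((l₁ + l₃ - l₂) / 2) + 1) * (Real.exp ((l₂ + l₃ - l₁) / 2) + 1) := by
  subst hG₁ hG₂ hG₃
  rw [show -(l₁ + l₂ + l₃) / 2 = -l₁/2 + -l₂/2 + -l₃/2 by ring,
      show (l₁ + l₂ - l₃) / 2 = l₁/2 + l₂/2 + -l₃/2 by ring,
      show (l₁ + l₃ - l₂) / 2 = l₁/2 + -l₂/2 + l₃/2 by ring,
      show (l₂ + l₃ - l₁) / 2 = -l₁/2 + l₂/2 + l₃/2 by ring,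
      show -l₁/2 = -(l₁/2) by ring, show -l₂/2 = -(l₂/2) by ring,
      show -l₃/2 = -(l₃/2) by ring]
  simp only [Real.exp_add, Real.exp_neg]
  have h₁ := Real.exp_ne_zero (l₁/2)
  have h₂ := Real.exp_ne_zero (l₂/2)
  have h₃ := Real.exp_ne_zero (l₃/2)
  field_simp
  ring
end

section
/- Fix real numbers ℓ, ℓ', p, and set G(x) = exp(x/2) + exp(−x/2) and G_p = exp(p/2) + exp(−p/2). Then the function t ↦ log( G(ℓ+t)·G(ℓ'+t)·G_p + G(ℓ+t)² + G(ℓ'+t)² + G_p² − 4 ) has derivative at t = 0 equal to sinh((ℓ+ℓ')/2) / ( cosh((ℓ+ℓ')/2) + cosh(p/2) ). (In particular the argument of the logarithm is strictly positive, being a product of four factors of the form exp(·)+1.) -/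
/-- The geodesic function `G(x) = 2 cosh(x/2)`. -/
noncomputable def geodesicFun (x : ℝ) : ℝ := Real.exp (x / 2) + Real.exp (-x / 2)

/-- The argument of the logarithm: `G(ℓ+t)·G(ℓ'+t)·G_p + G(ℓ+t)² + G(ℓ'+t)² + G_p² − 4`. -/
noncomputable def logArg (l l' p t : ℝ) : ℝ :=
  geodesicFun (l + t) * geodesicFun (l' + t) * geodesicFun p
    + (geodesicFun (l + t)) ^ 2 + (geodesicFun (l' + t)) ^ 2 + (geodesicFun p) ^ 2 - 4

lemma logArg_eq (l l' p t : ℝ) :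
    logArg l l' p t =
      4 * (Real.cosh ((l + l') / 2 + t) + Real.cosh (p / 2)) *
        (Real.cosh ((l - l') / 2) + Real.cosh (p / 2)) := by
  unfold logArg geodesicFun
  simp only [Real.cosh_eq]
  rw [show (l + t) / 2 = l / 2 + t / 2 by ring,
    show -(l + t) / 2 = -(l / 2) + -(t / 2) by ring,
    show (l' + t) / 2 = l' / 2 + t / 2 by ring,
    show -(l' + t) / 2 = -(l' / 2) + -(t / 2) by ring,
    show (l + l') / 2 + t = l / 2 + (l' / 2 + (t / 2 + t / 2)) by ring,
    show -(l / 2 + (l' / 2 + (t / 2 + t / 2))) = -(l / 2) + (-(l' / 2) + (-(t / 2) + -(t / 2))) by ring,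
    show (l - l') / 2 = l / 2 + -(l' / 2) by ring,
    show -(l / 2 + -(l' / 2)) = -(l / 2) + l' / 2 by ring,
    show -p / 2 = -(p / 2) by ring]
  simp only [Real.exp_add, Real.exp_neg]
  have h1 := (Real.exp_pos (l / 2)).ne'
  have h2 := (Real.exp_pos (l' / 2)).ne'
  have h3 := (Real.exp_pos (p / 2)).ne'
  have h4 := (Real.exp_pos (t / 2)).ne'
  field_simp
  ring

/-- The derivative identity
`[∂/∂ℓ_A + ∂/∂ℓ_{A'}] log(G_A G_{A'} G_p + G_A² + G_{A'}² + G_p² − 4)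
  = sinh((ℓ_A+ℓ_{A'})/2)/(cosh((ℓ_A+ℓ_{A'})/2)+cosh(p/2))`,
together with the strict positivity of the argument of the logarithm. -/
theorem deriv_log_geodesic_combination (l l' p : ℝ) :
    (∀ t : ℝ, 0 < logArg l l' p t) ∧
      HasDerivAt (fun t : ℝ => Real.log (logArg l l' p t))
        (Real.sinh ((l + l') / 2) / (Real.cosh ((l + l') / 2) + Real.cosh (p / 2))) 0 := by
  set s := (l + l') / 2 with hs
  set c := Real.cosh (p / 2) with hc
  set K := Real.cosh ((l - l') / 2) + c with hK
  have hKpos : 0 < K := add_pos (Real.cosh_pos _) (Real.cosh_pos _)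
  have hcs : ∀ t : ℝ, 0 < Real.cosh (s + t) + c :=
    fun t => add_pos (Real.cosh_pos _) (Real.cosh_pos _)
  have hpos : ∀ t : ℝ, 0 < logArg l l' p t := by
    intro t
    rw [logArg_eq]
    have := hcs t
    positivity
  refine ⟨hpos, ?_⟩
  have hf : HasDerivAt (fun t : ℝ => logArg l l' p t) (4 * K * Real.sinh s) 0 := by
    have h0 : HasDerivAt (fun t : ℝ => s + t) 1 0 := (hasDerivAt_id 0).const_add s
    have h1 : HasDerivAt (fun t : ℝ => Real.cosh (s + t)) (Real.sinh s) 0 := by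
      have := h0.cosh
      simpa using this
    have h2 : HasDerivAt (fun t : ℝ => 4 * (Real.cosh (s + t) + c) * K)
        (4 * K * Real.sinh s) 0 := by
      have : HasDerivAt (fun t : ℝ => 4 * (Real.cosh (s + t) + c) * K) (4 * Real.sinh s * K) 0 :=
        ((h1.add_const c).const_mul 4).mul_const K
      convert this using 1
      ring
    have heq : (fun t : ℝ => logArg l l' p t) =
        fun t : ℝ => 4 * (Real.cosh (s + t) + c) * K := by
      funext t; rw [logArg_eq]
    rw [heq]; exact h2
  have hlog := hf.log (hpos 0).ne'
  convert hlog using 1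
  rw [logArg_eq]
  have h5 : Real.cosh (s + 0) + c ≠ 0 := (hcs 0).ne'
  rw [add_zero] at h5 ⊢
  field_simp
  ring
end

section
/- Let A be a commutative ℝ-algebra and ⦃·,·⦄ : A → A → A a bracket that is additive in each argument, antisymmetric (⦃a,b⦄ = −⦃b,a⦄), and satisfies the Leibniz rule ⦃a, b·c⦄ = ⦃a,b⦄·c + b·⦃a,c⦄ in each argument. Let u be a unit of A, set G_A = u + u⁻¹, and let (G_n)_{n∈ℤ} be a family of elements of A satisfying the skein relations G_A·G_n = G_{n+1} + G_{n−1} and the bracket relations ⦃G_n, G_A⦄ = (1/2)·(G_{n−1} − G_{n+1}) for all n ∈ ℤ. Define E_n = G_{n−1} − u⁻¹·G_n. Then for every n ∈ ℤ: (i) E_n = u·E_{n+1}; and (ii) ⦃E_n, G_A⦄ = (1/2)·(u − u⁻¹)·E_n. -/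
/-- Proposition 3.1 of the paper for the one-holed torus, in exponentiated form:
the exponentiated twist coordinates `E_n = G_{n−1} − u⁻¹·G_n` satisfy
`E_n = u·E_{n+1}` and `⦃E_n, G_A⦄ = (1/2)(u − u⁻¹)·E_n`. -/
theorem one_holed_torus_twist {A : Type*} [CommRing A] [Algebra ℝ A]
    (br : A → A → A)
    (hadd_left : ∀ a b c : A, br (a + b) c = br a c + br b c)
    (hadd_right : ∀ a b c : A, br a (b + c) = br a b + br a c)
    (hanti : ∀ a b : A, br a b = - br b a)
    (hleib_right : ∀ a b c : A, br a (b * c) = br a b * c + b * br a c)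
    (hleib_left : ∀ a b c : A, br (a * b) c = br a c * b + a * br b c)
    (u : Aˣ) (G : ℤ → A)
    (hskein : ∀ n : ℤ, ((u : A) + (↑u⁻¹ : A)) * G n = G (n + 1) + G (n - 1))
    (hbr : ∀ n : ℤ,
      br (G n) ((u : A) + (↑u⁻¹ : A)) = (1 / 2 : ℝ) • (G (n - 1) - G (n + 1)))
    (E : ℤ → A)
    (hE : ∀ n : ℤ, E n = G (n - 1) - (↑u⁻¹ : A) * G n) :
    (∀ n : ℤ, E n = (u : A) * E (n + 1)) ∧
      (∀ n : ℤ, br (E n) ((u : A) + (↑u⁻¹ : A)) =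
        (1 / 2 : ℝ) • ((((u : A) - (↑u⁻¹ : A))) * E n)) := by
  have hwv : (u : A) * (↑u⁻¹ : A) = 1 := u.mul_inv
  have hvw : (↑u⁻¹ : A) * (u : A) = 1 := u.inv_mul
  -- the bracket of an element with itself vanishes
  have brself : ∀ a : A, br a a = 0 := by
    intro a
    have hz : br a a + br a a = 0 := by linear_combination hanti a a
    calc br a a = (1/2 : ℝ) • (br a a + br a a) := by
          rw [← two_smul ℝ, smul_smul]; norm_num
      _ = 0 := by rw [hz, smul_zero]
  -- the bracket of 1 with anything vanishes
  have br1 : ∀ c : A, br 1 c = 0 := by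
    intro c
    have h := hleib_left 1 1 c
    simp only [one_mul, mul_one] at h
    linear_combination -h
  -- bracket of u with u⁻¹ vanishes
  have brwv : br (u : A) (↑u⁻¹ : A) = 0 := by
    have h := hleib_left (u : A) (↑u⁻¹ : A) (↑u⁻¹ : A)
    rw [hwv, br1, brself, mul_zero, add_zero] at h
    have h2 : br (u : A) (↑u⁻¹ : A)
        = br (u : A) (↑u⁻¹ : A) * (↑u⁻¹ : A) * (u : A) := by
      rw [mul_assoc, hvw, mul_one]
    rw [h2, ← h, zero_mul]
  -- bracket of u⁻¹ with G_A vanishes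
  have brvGA : br (↑u⁻¹ : A) ((u : A) + (↑u⁻¹ : A)) = 0 := by
    rw [hadd_right, brself, hanti (↑u⁻¹ : A) (u : A), brwv]
    simp
  -- subtraction in the left argument
  have hsub_left : ∀ a b c : A, br (a - b) c = br a c - br b c := by
    intro a b c
    have h := hadd_left (a - b) b c
    rw [sub_add_cancel] at h
    linear_combination -h
  constructor
  · intro n
    have h1 : E (n + 1) = G n - (↑u⁻¹ : A) * G (n + 1) := by
      have := hE (n + 1); simpa using this
    rw [hE n, h1]
    linear_combination -(hskein n) + G (n + 1) * hwv
  · intro n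
    have hb1 : br (G (n - 1)) ((u : A) + (↑u⁻¹ : A))
        = (1/2 : ℝ) • (G (n - 2) - G n) := by
      have h := hbr (n - 1)
      have e1 : n - 1 - 1 = n - 2 := by ring
      have e2 : n - 1 + 1 = n := by ring
      rw [e1, e2] at h
      exact h
    have hb0 := hbr n
    have hs1 : ((u : A) + (↑u⁻¹ : A)) * G (n - 1) = G n + G (n - 2) := by
      have h := hskein (n - 1)
      have e1 : n - 1 - 1 = n - 2 := by ring
      have e2 : n - 1 + 1 = n := by ring
      rw [e1, e2] at h
      exact h
    have hs0 := hskein n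
    have key : (G (n - 2) - G n) - (↑u⁻¹ : A) * (G (n - 1) - G (n + 1))
        = ((u : A) - (↑u⁻¹ : A)) * (G (n - 1) - (↑u⁻¹ : A) * G n) := by
      linear_combination -hs1 - (↑u⁻¹ : A) * hs0 + 2 * G n * hwv
    rw [hE n, hsub_left, hleib_left, brvGA, zero_mul, zero_add, hb1, hb0,
        mul_smul_comm, ← smul_sub, key]
end

section
/- Let A be a commutative ring and ⦃·,·⦄ : A → A → A a bracket that is additive in each argument, antisymmetric (⦃a,b⦄ = −⦃b,a⦄), and satisfies the Leibniz rule ⦃a, b·c⦄ = ⦃a,b⦄·c + b·⦃a,c⦄ in each argument. Let u be a unit of A such that s = u − u⁻¹ is also a unit, set G_A = u + u⁻¹, and let S_B, S_{AB} ∈ A satisfy ⦃S_B, G_A⦄ = 0 and ⦃S_{AB}, G_A⦄ = 0. Let (z_n)_{n∈ℤ} be a family of elements of A satisfying, for all k ∈ ℤ, the skein relations G_A·z_{2k} = z_{2k+1} + z_{2k−1} + S_{AB} and G_A·z_{2k+1} = z_{2k+2} + z_{2k} + S_B, and the bracket relations ⦃z_n, G_A⦄ = z_{n−1} − z_{n+1}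 for all n ∈ ℤ. Define E_n = z_{n−1} − u⁻¹·z_n − s⁻¹·(u⁻¹·S_{AB} + S_B) for n even, and E_n = z_{n−1} − u⁻¹·z_n − s⁻¹·(u⁻¹·S_B + S_{AB}) for n odd. Then for every n ∈ ℤ: (i) E_n = u·E_{n+1}; and (ii) ⦃E_n, G_A⦄ = (u − u⁻¹)·E_n. -/
/-- Proposition 3.3 of the paper for the four-holed sphere, in exponentiated form:
the exponentiated twist coordinates
`E_n = z_{n−1} − u⁻¹·z_n − s⁻¹·(u⁻¹·S_{AB} + S_B)` (n even) /
`E_n = z_{n−1} − u⁻¹·z_n − s⁻¹·(u⁻¹·S_B + S_{AB})` (n odd)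
satisfy `E_n = u·E_{n+1}` and `⦃E_n, G_A⦄ = (u − u⁻¹)·E_n`. -/
theorem four_holed_sphere_twist {A : Type*} [CommRing A]
    (br : A → A → A)
    (hadd_left : ∀ a b c : A, br (a + b) c = br a c + br b c)
    (hadd_right : ∀ a b c : A, br a (b + c) = br a b + br a c)
    (hanti : ∀ a b : A, br a b = - br b a)
    (hleib_right : ∀ a b c : A, br a (b * c) = br a b * c + b * br a c)
    (hleib_left : ∀ a b c : A, br (a * b) c = br a c * b + a * br b c)
    (u s : Aˣ) (hs : (s : A) = (u : A) - (↑u⁻¹ : A))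
    (SB SAB : A)
    (hSB : br SB ((u : A) + (↑u⁻¹ : A)) = 0)
    (hSAB : br SAB ((u : A) + (↑u⁻¹ : A)) = 0)
    (z : ℤ → A)
    (hskein_even : ∀ k : ℤ,
      ((u : A) + (↑u⁻¹ : A)) * z (2 * k) = z (2 * k + 1) + z (2 * k - 1) + SAB)
    (hskein_odd : ∀ k : ℤ,
      ((u : A) + (↑u⁻¹ : A)) * z (2 * k + 1) = z (2 * k + 2) + z (2 * k) + SB)
    (hbr : ∀ n : ℤ, br (z n) ((u : A) + (↑u⁻¹ : A)) = z (n - 1) - z (n + 1))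
    (E : ℤ → A)
    (hE_even : ∀ n : ℤ, Even n →
      E n = z (n - 1) - (↑u⁻¹ : A) * z n - (↑s⁻¹ : A) * ((↑u⁻¹ : A) * SAB + SB))
    (hE_odd : ∀ n : ℤ, Odd n →
      E n = z (n - 1) - (↑u⁻¹ : A) * z n - (↑s⁻¹ : A) * ((↑u⁻¹ : A) * SB + SAB)) :
    (∀ n : ℤ, E n = (u : A) * E (n + 1)) ∧
      (∀ n : ℤ, br (E n) ((u : A) + (↑u⁻¹ : A)) = ((u : A) - (↑u⁻¹ : A)) * E n) := by
  set G : A := (u : A) + (↑u⁻¹ : A) with hGdef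
  set C : ℤ → A := fun n => if Even n then SAB else SB with hCdef
  -- basic bracket lemmas
  have hbr0 : ∀ x : A, br 0 x = 0 := by
    intro x
    have h := hadd_left 0 0 x
    rw [zero_add] at h
    exact left_eq_add.mp h
  have hbrneg : ∀ a x : A, br (-a) x = -br a x := by
    intro a x
    have h := hadd_left a (-a) x
    rw [add_neg_cancel, hbr0] at h
    linear_combination -h
  have hbrsub : ∀ a b x : A, br (a - b) x = br a x - br b x := by
    intro a b x
    rw [sub_eq_add_neg, hadd_left, hbrneg]
    ring
  have hbr1 : ∀ x : A, br 1 x = 0 := by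
    intro x
    have h := hleib_left 1 1 x
    simp only [one_mul, mul_one] at h
    linear_combination -h
  have hinv : ∀ (v : Aˣ) (x : A),
      br (↑v⁻¹ : A) x = -((↑v⁻¹ : A) * br (↑v : A) x * (↑v⁻¹ : A)) := by
    intro v x
    have h := hleib_left (↑v : A) (↑v⁻¹ : A) x
    rw [Units.mul_inv, hbr1] at h
    linear_combination (-(↑v⁻¹ : A)) * h - br (↑v⁻¹ : A) x * (Units.inv_mul v)
  have hui : (↑u : A) * (↑u⁻¹ : A) = 1 := Units.mul_inv u
  have hst : ((↑u : A) - (↑u⁻¹ : A)) * (↑s⁻¹ : A) = 1 := by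
    rw [← hs]; exact Units.mul_inv s
  -- unified skein relation
  have hsk : ∀ n : ℤ, G * z n = z (n + 1) + z (n - 1) + C n := by
    intro n
    obtain ⟨k, hk | hk⟩ := Int.even_or_odd' n
    · subst hk
      have hCe : C (2 * k) = SAB := by
        simp only [hCdef]; rw [if_pos ⟨k, two_mul k⟩]
      rw [hCe]
      exact hskein_even k
    · subst hk
      have hCo : C (2 * k + 1) = SB := by
        simp only [hCdef]; rw [if_neg (by rintro ⟨r, hr⟩; omega)]
      rw [hCo, show 2 * k + 1 + 1 = 2 * k + 2 from by ring,
        show 2 * k + 1 - 1 = 2 * k from by ring]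
      exact hskein_odd k
  have hCbr : ∀ n : ℤ, br (C n) G = 0 := by
    intro n
    simp only [hCdef]
    split
    · exact hSAB
    · exact hSB
  have hCper : ∀ n : ℤ, C (n + 2) = C n := by
    intro n
    have h : Even (n + 2) ↔ Even n :=
      ⟨fun ⟨r, hr⟩ => ⟨r - 1, by omega⟩, fun ⟨r, hr⟩ => ⟨r + 1, by omega⟩⟩
    simp only [hCdef]
    rw [if_congr h rfl rfl]
  -- unified formula for E
  have hE' : ∀ n : ℤ, E n = z (n - 1) - (↑u⁻¹ : A) * z n -
      (↑s⁻¹ : A) * ((↑u⁻¹ : A) * C n + C (n + 1)) := by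
    intro n
    rcases Int.even_or_odd n with he | ho
    · have h1 : C n = SAB := by simp only [hCdef]; rw [if_pos he]
      have h2 : C (n + 1) = SB := by
        simp only [hCdef]
        rw [if_neg (by rw [Int.even_add_one]; exact not_not_intro he)]
      rw [h1, h2]; exact hE_even n he
    · have h1 : C n = SB := by
        simp only [hCdef]; rw [if_neg (Int.not_even_iff_odd.mpr ho)]
      have h2 : C (n + 1) = SAB := by
        simp only [hCdef]; rw [if_pos (Odd.add_one ho)]
      rw [h1, h2]; exact hE_odd n ho
  -- key vanishing lemmas
  have hq : br (↑u⁻¹ : A) G = -((↑u⁻¹ : A) * br (↑u : A) G * (↑u⁻¹ : A)) := hinv u G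
  have hGG : br G G = br (↑u : A) G + br (↑u⁻¹ : A) G := by
    have h := hadd_left (↑u : A) (↑u⁻¹ : A) G
    rw [← hGdef] at h
    exact h
  have hGGz : ∀ n : ℤ, br G G * z n = 0 := by
    intro n
    have h1 := hleib_left G (z n) G
    rw [hsk n, hadd_left, hadd_left] at h1
    have b1 := hbr (n + 1)
    rw [show n + 1 - 1 = n from by ring, show n + 1 + 1 = n + 2 from by ring] at b1
    have b2 := hbr (n - 1)
    rw [show n - 1 - 1 = n - 2 from by ring, show n - 1 + 1 = n from by ring] at b2
    have b3 := hbr n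
    have s1 := hsk (n - 1)
    rw [show n - 1 + 1 = n from by ring, show n - 1 - 1 = n - 2 from by ring] at s1
    have s2 := hsk (n + 1)
    rw [show n + 1 + 1 = n + 2 from by ring, show n + 1 - 1 = n from by ring] at s2
    have c1 := hCper (n - 1)
    rw [show n - 1 + 2 = n + 1 from by ring] at c1
    linear_combination -h1 + b1 + b2 + hCbr n - G * b3 - s1 + s2 + c1
  have hduz : ∀ n : ℤ, br (↑u : A) G * z n = 0 := by
    intro n
    have h := hGGz n
    rw [hGG, hq] at h
    linear_combination ((↑u : A) * (↑s⁻¹ : A)) * h +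
      ((↑u⁻¹ : A) * (↑s⁻¹ : A) * br (↑u : A) G * z n) * hui -
      (br (↑u : A) G * z n) * hst
  have hdC : ∀ n : ℤ, br (↑u : A) G * C n = 0 := by
    intro n
    linear_combination (-(br (↑u : A) G)) * hsk n + G * hduz n - hduz (n + 1) - hduz (n - 1)
  -- part (i)
  have part1 : ∀ n : ℤ, E n = (↑u : A) * E (n + 1) := by
    intro n
    have e1 := hE' n
    have e2 := hE' (n + 1)
    rw [show n + 1 - 1 = n from by ring, show n + 1 + 1 = n + 2 from by ring, hCper n] at e2
    linear_combination e1 - (↑u : A) * e2 + (z (n + 1) + (↑s⁻¹ : A) * C (n + 1)) * hui +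
      C n * hst - hsk n + z n * hGdef
  -- part (ii)
  have part2 : ∀ n : ℤ, br (E n) G = ((↑u : A) - (↑u⁻¹ : A)) * E n := by
    intro n
    have ht : br (↑s⁻¹ : A) G = -((↑s⁻¹ : A) * br (↑s : A) G * (↑s⁻¹ : A)) := hinv s G
    have hsbr : br (↑s : A) G =
        br (↑u : A) G + (↑u⁻¹ : A) * br (↑u : A) G * (↑u⁻¹ : A) := by
      rw [hs, hbrsub, hq]; ring
    rw [hsbr] at ht
    have b0 := hbr n
    have b1 := hbr (n - 1)
    rw [show n - 1 - 1 = n - 2 from by ring, show n - 1 + 1 = n from by ring] at b1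
    have l1 := hleib_left (↑u⁻¹ : A) (z n) G
    have l2 := hleib_left (↑s⁻¹ : A) ((↑u⁻¹ : A) * C n + C (n + 1)) G
    have a1 := hadd_left ((↑u⁻¹ : A) * C n) (C (n + 1)) G
    have l3 := hleib_left (↑u⁻¹ : A) (C n) G
    have s1 := hsk (n - 1)
    rw [show n - 1 + 1 = n from by ring, show n - 1 - 1 = n - 2 from by ring] at s1
    have s0 := hsk n
    have cp := hCper (n - 1)
    rw [show n - 1 + 2 = n + 1 from by ring] at cp
    rw [hE' n, hbrsub, hbrsub]
    linear_combination b1 - l1 - l2 - (↑u⁻¹ : A) * b0 - (↑s⁻¹ : A) * a1 -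
      (↑s⁻¹ : A) * l3 - (↑s⁻¹ : A) * (↑u⁻¹ : A) * hCbr n - (↑s⁻¹ : A) * hCbr (n + 1) +
      (-(z n) - (↑s⁻¹ : A) * C n) * hq +
      (-((↑u⁻¹ : A) * C n + C (n + 1))) * ht +
      ((↑u⁻¹ : A) * (↑u⁻¹ : A)) * hduz n +
      ((↑s⁻¹ : A) * (↑u⁻¹ : A) * (↑u⁻¹ : A) +
        (↑s⁻¹ : A) * (↑s⁻¹ : A) * (1 + (↑u⁻¹ : A) * (↑u⁻¹ : A)) * (↑u⁻¹ : A)) * hdC n +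
      ((↑s⁻¹ : A) * (↑s⁻¹ : A) * (1 + (↑u⁻¹ : A) * (↑u⁻¹ : A))) * hdC (n + 1) -
      s1 - (↑u⁻¹ : A) * s0 + cp + (z (n - 1) + (↑u⁻¹ : A) * z n) * hGdef +
      (2 * z n) * hui + ((↑u⁻¹ : A) * C n + C (n + 1)) * hst
  exact ⟨part1, part2⟩
end

section
/- Let ℓ ≠ 0 be real, u = exp(ℓ/2), g = u + u⁻¹, s = u − u⁻¹, and let G₁, G₂, a, b be real numbers satisfying the Markov relation g·a·b − a² − b² − a·G₂ − b·G₁ − 1 = 0. Then ( s·(a − u⁻¹·b) − G₁ − u⁻¹·G₂ )·( −s·(a − u·b) − G₁ − u·G₂ ) = g·G₁·G₂ + g² + G₁² + G₂² − 4. -/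
/-- Lemma 4.2 of the paper for the three-holed sphere with bordered cusps: the product
of the two exponentiated twist candidates equals `G_AG₁G₂ + G_A² + G₁² + G₂² − 4`. -/
theorem cusp_twist_normalization (l : ℝ) (hl : l ≠ 0)
    (u g s G₁ G₂ a b : ℝ)
    (hu : u = Real.exp (l / 2))
    (hg : g = u + u⁻¹)
    (hss : s = u - u⁻¹)
    (hMarkov : g * a * b - a ^ 2 - b ^ 2 - a * G₂ - b * G₁ - 1 = 0) :
    (s * (a - u⁻¹ * b) - G₁ - u⁻¹ * G₂) * (-(s * (a - u * b)) - G₁ - u * G₂) =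
      g * G₁ * G₂ + g ^ 2 + G₁ ^ 2 + G₂ ^ 2 - 4 := by
  have h0 : u ≠ 0 := by rw [hu]; exact (Real.exp_pos _).ne'
  have huv : u * u⁻¹ = 1 := mul_inv_cancel₀ h0
  subst hg hss
  linear_combination (u - u⁻¹) ^ 2 * hMarkov +
    (G₂ ^ 2 - 4 - b ^ 2 * (u - u⁻¹) ^ 2) * huv
end

section
/- Let A be a commutative ring, let G_A, G₁, G₂ ∈ A, and let (X_n)_{n∈ℤ} be a family of elements of A satisfying, for all l ∈ ℤ, the skein relations G_A·X_{2l} = X_{2l+1} + X_{2l−1} + G₂ and G_A·X_{2l+1} = X_{2l+2} + X_{2l} + G₁. For k ∈ ℤ set α_k = G₁ if k is even and α_k = G₂ if k is odd, and let M_k = G_A·X_k·X_{k−1} − X_k² − X_{k−1}² − G₂·X_j − G₁·X_i − 1, where among {k, k−1} the odd index is j and the even index is i. If M_0 = 0, then M_k = 0 for every k ∈ ℤ, and moreover X_{k+1}·X_{k−1} = X_k² + α_k·X_k + 1 for every k ∈ ℤ. -/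
/-- Propagation of the Markov relation (4.6) of the paper along Dehn twists: if the
Markov quantity `M_0` vanishes and the skein relations hold, then `M_k = 0` for all `k`,
and `X_{k+1}·X_{k−1} = X_k² + α_k·X_k + 1` for all `k`. -/
theorem markov_relation_propagation {A : Type*} [CommRing A]
    (GA G₁ G₂ : A) (X : ℤ → A)
    (hskein_even : ∀ l : ℤ, GA * X (2 * l) = X (2 * l + 1) + X (2 * l - 1) + G₂)
    (hskein_odd : ∀ l : ℤ, GA * X (2 * l + 1) = X (2 * l + 2) + X (2 * l) + G₁)
    (α : ℤ → A)
    (hα_even : ∀ k : ℤ, Even k → α k = G₁)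
    (hα_odd : ∀ k : ℤ, Odd k → α k = G₂)
    (M : ℤ → A)
    (hM_even : ∀ k : ℤ, Even k →
      M k = GA * X k * X (k - 1) - X k ^ 2 - X (k - 1) ^ 2
        - G₂ * X (k - 1) - G₁ * X k - 1)
    (hM_odd : ∀ k : ℤ, Odd k →
      M k = GA * X k * X (k - 1) - X k ^ 2 - X (k - 1) ^ 2
        - G₂ * X k - G₁ * X (k - 1) - 1)
    (hM0 : M 0 = 0) :
    (∀ k : ℤ, M k = 0) ∧
      (∀ k : ℤ, X (k + 1) * X (k - 1) = X k ^ 2 + α k * X k + 1) := by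
  have step : ∀ k : ℤ, M (k + 1) = M k := by
    intro k
    rcases Int.even_or_odd k with ⟨l, hl⟩ | ⟨l, hl⟩
    · have hk : k = 2 * l := by omega
      subst hk
      rw [hM_odd (2 * l + 1) ⟨l, by ring⟩, hM_even (2 * l) ⟨l, by ring⟩,
        show (2 * l + 1 - 1 : ℤ) = 2 * l by ring]
      linear_combination (X (2 * l + 1) - X (2 * l - 1)) * hskein_even l
    · have hk : k = 2 * l + 1 := by omega
      subst hk
      rw [show (2 * l + 1 + 1 : ℤ) = 2 * l + 2 by ring,
        hM_even (2 * l + 2) ⟨l + 1, by ring⟩, hM_odd (2 * l + 1) ⟨l, by ring⟩,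
        show (2 * l + 2 - 1 : ℤ) = 2 * l + 1 by ring,
        show (2 * l + 1 - 1 : ℤ) = 2 * l by ring]
      linear_combination (X (2 * l + 2) - X (2 * l)) * hskein_odd l
  have hMzero : ∀ k : ℤ, M k = 0 := by
    intro k
    induction k using Int.induction_on with
    | zero => exact hM0
    | succ n ih => rw [step]; exact ih
    | pred n ih =>
      have := step (-(n : ℤ) - 1)
      rw [show (-(n : ℤ) - 1 + 1) = -n by ring] at this
      rw [← this]; exact ih
  refine ⟨hMzero, fun k => ?_⟩
  rcases Int.even_or_odd k with ⟨l, hl⟩ | ⟨l, hl⟩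
  · have hk : k = 2 * l := by omega
    subst hk
    rw [hα_even (2 * l) ⟨l, by ring⟩]
    have h1 := hMzero (2 * l + 1)
    rw [hM_odd (2 * l + 1) ⟨l, by ring⟩,
      show (2 * l + 1 - 1 : ℤ) = 2 * l by ring] at h1
    linear_combination h1 - X (2 * l + 1) * hskein_even l
  · have hk : k = 2 * l + 1 := by omega
    subst hk
    rw [hα_odd (2 * l + 1) ⟨l, by ring⟩,
      show (2 * l + 1 + 1 : ℤ) = 2 * l + 2 by ring,
      show (2 * l + 1 - 1 : ℤ) = 2 * l by ring]
    have h1 := hMzero (2 * l + 2)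
    rw [hM_even (2 * l + 2) ⟨l + 1, by ring⟩,
      show (2 * l + 2 - 1 : ℤ) = 2 * l + 1 by ring] at h1
    linear_combination h1 - X (2 * l + 2) * hskein_odd l
end

section
/- Let A be a commutative ℝ-algebra and ⦃·,·⦄ : A → A → A a bracket that is additive in each argument, antisymmetric (⦃a,b⦄ = −⦃b,a⦄), and satisfies the Leibniz rule ⦃a, b·c⦄ = ⦃a,b⦄·c + b·⦃a,c⦄ in each argument. Let (λ⁰_i)_{i∈I} and (λ¹_i)_{i∈I} be families of units of A indexed by a linearly ordered set I, satisfying for all i < j in I: ⦃λ⁰_i, λ⁰_j⦄ = (1/4)·λ⁰_i·λ⁰_j, ⦃λ¹_i, λ¹_j⦄ = (1/4)·λ¹_i·λ¹_j, ⦃λ¹_i, λ⁰_j⦄ = 0, and ⦃λ⁰_i, λ¹_j⦄ = λ¹_i·λ⁰_j − (1/2)·λ⁰_i·λ¹_j. Then the elements x_i = λ¹_i·(λ⁰_i)⁻¹ satisfy ⦃x_i, x_j⦄ = x_i·x_j − x_i² for all i < j. -/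
/-- The computation of Section 5.2 of the paper for the disc with bordered cusps:
from the Goldman/Ptolemy brackets on the λ-lengths `λ⁰_i, λ¹_i`, the ratios
`x_i = λ¹_i·(λ⁰_i)⁻¹` satisfy `⦃x_i, x_j⦄ = x_i·x_j − x_i²` for `i < j`. -/
theorem disc_lambda_ratio_bracket {A : Type*} [CommRing A] [Algebra ℝ A]
    {I : Type*} [LinearOrder I]
    (br : A → A → A)
    (hadd_left : ∀ a b c : A, br (a + b) c = br a c + br b c)
    (hadd_right : ∀ a b c : A, br a (b + c) = br a b + br a c)
    (hanti : ∀ a b : A, br a b = - br b a)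
    (hleib_right : ∀ a b c : A, br a (b * c) = br a b * c + b * br a c)
    (hleib_left : ∀ a b c : A, br (a * b) c = br a c * b + a * br b c)
    (lam0 lam1 : I → Aˣ)
    (h00 : ∀ i j : I, i < j →
      br ((lam0 i : A)) ((lam0 j : A)) = (1 / 4 : ℝ) • ((lam0 i : A) * (lam0 j : A)))
    (h11 : ∀ i j : I, i < j →
      br ((lam1 i : A)) ((lam1 j : A)) = (1 / 4 : ℝ) • ((lam1 i : A) * (lam1 j : A)))
    (h10 : ∀ i j : I, i < j → br ((lam1 i : A)) ((lam0 j : A)) = 0)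
    (h01 : ∀ i j : I, i < j →
      br ((lam0 i : A)) ((lam1 j : A)) =
        (lam1 i : A) * (lam0 j : A) - (1 / 2 : ℝ) • ((lam0 i : A) * (lam1 j : A))) :
    ∀ i j : I, i < j →
      br ((lam1 i : A) * ((lam0 i)⁻¹ : Aˣ)) ((lam1 j : A) * ((lam0 j)⁻¹ : Aˣ)) =
        ((lam1 i : A) * ((lam0 i)⁻¹ : Aˣ)) * ((lam1 j : A) * ((lam0 j)⁻¹ : Aˣ)) -
          ((lam1 i : A) * ((lam0 i)⁻¹ : Aˣ)) ^ 2 := by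
  have hone : ∀ x : A, br x 1 = 0 := by
    intro x
    have h := hleib_right x 1 1
    rw [mul_one, mul_one, one_mul] at h
    linear_combination -h
  have hinv : ∀ (x : A) (u : Aˣ),
      br x ((u⁻¹ : Aˣ) : A) = -(((u⁻¹ : Aˣ) : A) * ((u⁻¹ : Aˣ) : A)) * br x (u : A) := by
    intro x u
    have h := hleib_right x (u : A) ((u⁻¹ : Aˣ) : A)
    rw [Units.mul_inv, hone] at h
    have hu : ((u : A)) * ((u⁻¹ : Aˣ) : A) = 1 := Units.mul_inv u
    linear_combination (-(((u⁻¹ : Aˣ) : A))) * h - br x ((u⁻¹ : Aˣ) : A) * hu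
  intro i j hij
  set a : A := (lam1 i : A) with ha
  set b : A := (((lam0 i)⁻¹ : Aˣ) : A) with hb
  set c : A := (lam1 j : A) with hc
  set d : A := (((lam0 j)⁻¹ : Aˣ) : A) with hd
  set a0 : A := (lam0 i : A) with ha0
  set c0 : A := (lam0 j : A) with hc0
  have had : br a d = 0 := by
    rw [hd, hinv a (lam0 j), ← hc0, h10 i j hij, mul_zero]
  have hbc : br b c = -(b * b) * (a * c0 - (1 / 2 : ℝ) • (a0 * c)) := by
    rw [hanti, hc, hb, hinv (lam1 j : A) (lam0 i), ← ha0, hanti ((lam1 j : A)),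
      ← hc, h01 i j hij, ← ha, ← hc0, ← hb]
    ring
  have hbd : br b d = (b * b) * ((d * d) * ((1 / 4 : ℝ) • (a0 * c0))) := by
    rw [hd, hinv b (lam0 j), ← hc0, hanti b c0, hc0, hb, hinv ((lam0 j : A)) (lam0 i),
      ← ha0, ← hc0, hanti c0 a0, ha0, hc0, h00 i j hij, ← ha0, ← hc0, ← hb]
    ring
  have hbi : a0 * b = 1 := Units.mul_inv (lam0 i)
  have hbj : c0 * d = 1 := Units.mul_inv (lam0 j)
  rw [hleib_left, hleib_right, hleib_right, h11 i j hij, had, hbc, hbd]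
  simp only [Algebra.smul_def]
  have hr : algebraMap ℝ A (1/4) + algebraMap ℝ A (1/4) + algebraMap ℝ A (1/2) = 1 := by
    rw [← map_add, ← map_add]; norm_num
  linear_combination (a*b*c*d) * hr - (a*a*b*b) * hbj
    + ((algebraMap ℝ A (1/4)) * a*b*c*d*a0*b) * hbj
    + ((algebraMap ℝ A (1/4)) * a*b*c*d) * hbi
    + ((algebraMap ℝ A (1/2)) * a*b*c*d) * hbi
end
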